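/- arXiv:2304.01839 — 5 statements merged into one kernel-verified Lean document; each statement's English description precedes it below -/
import Mathlib

section
/- Let ε = ±1, and let (x, y, z) ∈ R³ satisfy y² + z² > 0 and x² + ε(y² + z²) > 0. Let Q = x² + ε(y² + z²) and s = √Q. Define the 4×4 matrix T with rows: (1, 0, 0, 0); (0, x/Q, −y/Q, −z/Q); (0, εy/Q, (xy² + z²s)/(Q(y²+z²)), (xyz − yzs)/(Q(y²+z²))); (0, εz/Q, (xyz − yzs)/(Q(y²+z²)), (xz² + y²s)/(Q(y²+z²))). Then the row vector (1, x, y, z) multiplied by T equals (1, 1, 0, 0). -/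
open Real Matrix

theorem transformation_matrix_sends_P_to_origin (ε x y z : ℝ)
    (hε : ε = 1 ∨ ε = -1)
    (hyz : 0 < y ^ 2 + z ^ 2)
    (Q : ℝ) (hQdef : Q = x ^ 2 + ε * (y ^ 2 + z ^ 2)) (hQ : 0 < Q)
    (s : ℝ) (hs : s = Real.sqrt Q)
    (T : Matrix (Fin 4) (Fin 4) ℝ)
    (hT : T = !![1, 0, 0, 0;
                 0, x / Q, -y / Q, -z / Q;
                 0, ε * y / Q, (x * y ^ 2 + z ^ 2 * s) / (Q * (y ^ 2 + z ^ 2)),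
                    (x * y * z - y * z * s) / (Q * (y ^ 2 + z ^ 2));
                 0, ε * z / Q, (x * y * z - y * z * s) / (Q * (y ^ 2 + z ^ 2)),
                    (x * z ^ 2 + y ^ 2 * s) / (Q * (y ^ 2 + z ^ 2))]) :
    Matrix.vecMul ![1, x, y, z] T = ![1, 1, 0, 0] := by
  have hQ' : Q ≠ 0 := ne_of_gt hQ
  have hyz' : y ^ 2 + z ^ 2 ≠ 0 := ne_of_gt hyz
  subst hT
  funext i
  fin_cases i <;>
    simp [Matrix.vecMul, dotProduct, Fin.sum_univ_four, Matrix.vecHead, Matrix.vecTail] <;>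
    field_simp <;> nlinarith [hQdef, sq_nonneg y, sq_nonneg z]
end

section
/- Let ε = +1 (case S²×R) or ε = −1 (case H²×R), and let P = (x, y, z) with y² + z² > 0 and Q := x² + ε(y² + z²) > 0 (and additionally x/√Q ∈ [−1, 1] enforced automatically when ε = +1, and x/√Q ≥ 1 when ε = −1). Define the tangent data vector w(P) = ((1/2)·log Q, (y/√(y²+z²))·arcC(x/√Q), (z/√(y²+z²))·arcC(x/√Q)), where arcC = arccos if ε = +1 and arcC = arcosh if ε = −1. Then the translation curve γ(τ) = (e^{τ sin v} C(τ cos v), e^{τ sin v} S(τ cos v) cos u, e^{τ sin v} S(τ cos v) sin u) (with C = cos, S = sin if ε = +1; C = cosh, S = sinh if ε = −1) with parameters τ₀ = |w(P)|, sin v = (1/(2τ₀))·log Q, u chosen with cos u = y/√(y²+z²), sin u = z/√(y²+z²), satisfies γ(τ₀) = (x, y, z); moreover τ₀ · γ'(0) = w(P), i.e. w(P) is τ₀ times the unit tangent vector (sin v, cos v cos u, cos v sin u) of the translation curve from the origin (1,0,0) to P. -/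
open Real

noncomputable def arcosh (x : ℝ) : ℝ := Real.log (x + Real.sqrt (x ^ 2 - 1))

/-- `arcC` is `arccos` in the spherical case (ε = 1) and `arcosh` in the hyperbolic case. -/
noncomputable def arcC (ε x : ℝ) : ℝ := if ε = 1 then Real.arccos x else _root_.arcosh x

/-- `C` is `cos` (ε = 1) or `cosh` (ε = -1). -/
noncomputable def Cfun (ε t : ℝ) : ℝ := if ε = 1 then Real.cos t else Real.cosh t

/-- `S` is `sin` (ε = 1) or `sinh` (ε = -1). -/
noncomputable def Sfun (ε t : ℝ) : ℝ := if ε = 1 then Real.sin t else Real.sinh t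

/-!
With `t = x / √Q` one has `ε (1 - t²) = (y² + z²) / Q > 0`, so `A = arcC ε t` is positive,
`C A = x / √Q` and `S A = √(y² + z²) / √Q`. Since `w = (½ log Q, A cos u, A sin u)`, we get
`τ₀ = √(w₁² + A²)`, and `v ∈ [-π/2, π/2]` makes `(τ₀ sin v, τ₀ cos v) = (w₁, A)` polar coordinates.
Then `exp (τ₀ sin v) = √Q` and `γ(τ₀) = √Q • (C A, S A cos u, S A sin u) = (x, y, z)`.
-/

lemma arcosh_eq_real_arcosh : _root_.arcosh = Real.arcosh := rfl

section arcC

variable {ε t : ℝ}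

-- `0 ≤ ε (1 - t²)`, with `0 < t` when `ε = -1`, says that `t` lies in the domain of `arcC ε`:
-- `[-1, 1]` for `arccos`, `[1, ∞)` for `arcosh`.

lemma Cfun_arcC (hε : ε = 1 ∨ ε = -1) (ht : 0 ≤ ε * (1 - t ^ 2)) (hpos : ε = -1 → 0 < t) :
    Cfun ε (arcC ε t) = t := by
  rcases hε with rfl | rfl
  · have h := abs_le.mp (sq_le_one_iff_abs_le_one t |>.mp (by linarith))
    simp [Cfun, arcC, cos_arccos h.1 h.2]
  · have h1 : 1 ≤ t := by nlinarith [hpos rfl]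
    norm_num [Cfun, arcC, arcosh_eq_real_arcosh, cosh_arcosh h1]

lemma Sfun_arcC (hε : ε = 1 ∨ ε = -1) (ht : 0 ≤ ε * (1 - t ^ 2)) (hpos : ε = -1 → 0 < t) :
    Sfun ε (arcC ε t) = √(ε * (1 - t ^ 2)) := by
  rcases hε with rfl | rfl
  · simp [Sfun, arcC, sin_arccos]
  · have h1 : 1 ≤ t := by nlinarith [hpos rfl]
    norm_num [Sfun, arcC, arcosh_eq_real_arcosh, sinh_arcosh h1]

lemma arcC_pos (hε : ε = 1 ∨ ε = -1) (ht : 0 < ε * (1 - t ^ 2)) (hpos : ε = -1 → 0 < t) :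
    0 < arcC ε t := by
  rcases hε with rfl | rfl
  · have h := abs_lt.mp (sq_lt_one_iff_abs_lt_one t |>.mp (by linarith))
    simpa [arcC, arccos_pos] using h.2
  · have h1 : 1 < t := by nlinarith [hpos rfl]
    norm_num [arcC, arcosh_eq_real_arcosh, arcosh_pos h1]

end arcC

lemma mul_sin_cos_eq_of_sin_eq_div {a b τ v : ℝ} (hb : 0 < b) (hτ : τ = √(a ^ 2 + b ^ 2))
    (hv : v ∈ Set.Icc (-(π / 2)) (π / 2)) (hsin : sin v = a / τ) :
    τ * sin v = a ∧ τ * cos v = b := by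
  have hτpos : 0 < τ := hτ ▸ sqrt_pos.2 (by positivity)
  have hτsq : τ ^ 2 = a ^ 2 + b ^ 2 := hτ ▸ sq_sqrt (by positivity)
  have hsin' : τ * sin v = a := by rw [hsin]; field_simp
  refine ⟨hsin', ?_⟩
  have hcos_sq : (τ * cos v) ^ 2 = b ^ 2 := by
    rw [mul_pow, cos_sq', mul_sub, ← mul_pow, hsin', hτsq]; ring
  exact (pow_left_inj₀ (mul_nonneg hτpos.le (cos_nonneg_of_mem_Icc hv)) hb.le two_ne_zero).1
    hcos_sq

lemma mul_one_sub_div_sqrt_sq {ε x r Q : ℝ} (hε : ε ^ 2 = 1) (hQdef : Q = x ^ 2 + ε * r)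
    (hQ : 0 < Q) : ε * (1 - (x / √Q) ^ 2) = r / Q := by
  rw [div_pow, sq_sqrt hQ.le]
  field_simp
  rw [hQdef]
  linear_combination r * hε

theorem tangent_of_translation_curve_general (ε x y z : ℝ)
    (hε : ε = 1 ∨ ε = -1)
    (hyz : 0 < y ^ 2 + z ^ 2)
    (Q : ℝ) (hQdef : Q = x ^ 2 + ε * (y ^ 2 + z ^ 2)) (hQ : 0 < Q)
    (hhyp : ε = -1 → 0 < x)
    (w₁ w₂ w₃ : ℝ)
    (hw₁ : w₁ = Real.log Q / 2)
    (hw₂ : w₂ = y / Real.sqrt (y ^ 2 + z ^ 2) * arcC ε (x / Real.sqrt Q))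
    (hw₃ : w₃ = z / Real.sqrt (y ^ 2 + z ^ 2) * arcC ε (x / Real.sqrt Q))
    (τ₀ : ℝ) (hτ₀ : τ₀ = Real.sqrt (w₁ ^ 2 + w₂ ^ 2 + w₃ ^ 2))
    (u v : ℝ)
    (hv : v ∈ Set.Icc (-(π/2)) (π/2))
    (hsinv : Real.sin v = Real.log Q / (2 * τ₀))
    (hcosu : Real.cos u = y / Real.sqrt (y ^ 2 + z ^ 2))
    (hsinu : Real.sin u = z / Real.sqrt (y ^ 2 + z ^ 2)) :
    (Real.exp (τ₀ * Real.sin v) * Cfun ε (τ₀ * Real.cos v) = x ∧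
     Real.exp (τ₀ * Real.sin v) * Sfun ε (τ₀ * Real.cos v) * Real.cos u = y ∧
     Real.exp (τ₀ * Real.sin v) * Sfun ε (τ₀ * Real.cos v) * Real.sin u = z) ∧
    (τ₀ * Real.sin v = w₁ ∧
     τ₀ * (Real.cos v * Real.cos u) = w₂ ∧
     τ₀ * (Real.cos v * Real.sin u) = w₃) := by
  have hsQ : 0 < √Q := sqrt_pos.2 hQ
  have hdom := mul_one_sub_div_sqrt_sq (by rcases hε with rfl | rfl <;> norm_num) hQdef hQ
  have hpos : ε = -1 → 0 < x / √Q := fun h ↦ div_pos (hhyp h) hsQ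
  set A := arcC ε (x / √Q)
  have hA : 0 < A := arcC_pos hε (hdom ▸ div_pos hyz hQ) hpos
  have hC : Cfun ε A = x / √Q := Cfun_arcC hε (hdom ▸ by positivity) hpos
  have hS : Sfun ε A = √(y ^ 2 + z ^ 2) / √Q := by
    rw [Sfun_arcC hε (hdom ▸ by positivity) hpos, hdom, sqrt_div hyz.le]
  rw [← hcosu] at hw₂
  rw [← hsinu] at hw₃
  have hτ : τ₀ = √(w₁ ^ 2 + A ^ 2) := by
    rw [hτ₀, hw₂, hw₃]
    congr 1
    linear_combination A ^ 2 * sin_sq_add_cos_sq u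
  obtain ⟨hsin, hcos⟩ := mul_sin_cos_eq_of_sin_eq_div hA hτ hv (by rw [hsinv, hw₁, div_div])
  have hexp : exp (τ₀ * sin v) = √Q := by
    rw [hsin, hw₁, ← log_sqrt hQ.le, exp_log hsQ]
  have hr : 0 < √(y ^ 2 + z ^ 2) := sqrt_pos.2 hyz
  refine ⟨⟨?_, ?_, ?_⟩, hsin, ?_, ?_⟩
  · rw [hexp, hcos, hC]; field_simp
  · rw [hexp, hcos, hS, hcosu]; field_simp
  · rw [hexp, hcos, hS, hsinu]; field_simp
  · rw [← mul_assoc, hcos, hw₂, mul_comm]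
  · rw [← mul_assoc, hcos, hw₃, mul_comm]

theorem tangent_of_translation_curve (ε x y z : ℝ)
    (hε : ε = 1 ∨ ε = -1)
    (hyz : 0 < y ^ 2 + z ^ 2)
    (Q : ℝ) (hQdef : Q = x ^ 2 + ε * (y ^ 2 + z ^ 2)) (hQ : 0 < Q)
    (hhyp : ε = -1 → 0 < x)
    (hsph : ε = 1 → ¬ (Real.arccos (x / Real.sqrt Q) = 0 ∧ Real.log Q = 0))
    (w₁ w₂ w₃ : ℝ)
    (hw₁ : w₁ = Real.log Q / 2)
    (hw₂ : w₂ = y / Real.sqrt (y ^ 2 + z ^ 2) * arcC ε (x / Real.sqrt Q))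
    (hw₃ : w₃ = z / Real.sqrt (y ^ 2 + z ^ 2) * arcC ε (x / Real.sqrt Q))
    (τ₀ : ℝ) (hτ₀ : τ₀ = Real.sqrt (w₁ ^ 2 + w₂ ^ 2 + w₃ ^ 2))
    (u v : ℝ)
    (hv : v ∈ Set.Icc (-(π/2)) (π/2))
    (hsinv : Real.sin v = Real.log Q / (2 * τ₀))
    (hcosu : Real.cos u = y / Real.sqrt (y ^ 2 + z ^ 2))
    (hsinu : Real.sin u = z / Real.sqrt (y ^ 2 + z ^ 2)) :
    (Real.exp (τ₀ * Real.sin v) * Cfun ε (τ₀ * Real.cos v) = x ∧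
     Real.exp (τ₀ * Real.sin v) * Sfun ε (τ₀ * Real.cos v) * Real.cos u = y ∧
     Real.exp (τ₀ * Real.sin v) * Sfun ε (τ₀ * Real.cos v) * Real.sin u = z) ∧
    (τ₀ * Real.sin v = w₁ ∧
     τ₀ * (Real.cos v * Real.cos u) = w₂ ∧
     τ₀ * (Real.cos v * Real.sin u) = w₃) :=
  tangent_of_translation_curve_general ε x y z hε hyz Q hQdef hQ hhyp w₁ w₂ w₃ hw₁ hw₂ hw₃ τ₀ hτ₀ u
    v hv hsinv hcosu hsinu
end

section
/- Let a > 0 and ε = ±1. The Thaloid of the fibre segment with endpoints A₁ = (1, 1, 0, 0) and A₂ = (1, a, 0, 0) in S²×R (ε = +1) or H²×R (ε = −1) — i.e. the set of points (x, y, z) with y² + z² > 0, Q := x² + ε(y²+z²) > 0, satisfying (1/4)·log(1/Q)·log(a²/Q) + arcC(x/√Q)² = 0 — coincides with the translation sphere of radius r = (1/2)·log a centered at C = (1, √a, 0, 0): namely the set of points whose image under the fibre translation diag(1, 1/√a, 1/√a, 1/√a) satisfies the sphere equation (1/4)·(log Q')² + arcC(x'/√Q')² = r² with Q' = x'² + ε(y'²+z'²).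 -/
open Real

/-!
The fibre translation by `1/√a` divides `Q = x² + ε(y² + z²)` by `a` and leaves the angular
coordinate `x/√Q` unchanged, so only the logarithmic term of the sphere equation moves. Writing
`L = log Q`, the Thaloid term is `(-L)(2 log a - L)/4 = (L - log a)²/4 - (log a / 2)²`, and
`L - log a = log (Q/a)` is the logarithmic coordinate of the translated point.
-/

lemma quadForm_div_sqrt (ε x y z : ℝ) {a : ℝ} (ha : 0 ≤ a) :
    (x / √a) ^ 2 + ε * ((y / √a) ^ 2 + (z / √a) ^ 2) = (x ^ 2 + ε * (y ^ 2 + z ^ 2)) / a := by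
  simp only [div_pow, sq_sqrt ha]
  ring

lemma div_sqrt_div_sqrt_div (x Q : ℝ) {a : ℝ} (ha : 0 < a) :
    x / √a / √(Q / a) = x / √Q := by
  have hsa : √a ≠ 0 := (sqrt_pos.mpr ha).ne'
  rw [sqrt_div' Q ha.le, div_div_div_cancel_right₀ hsa]

lemma log_one_div_mul_log_sq_div {Q a : ℝ} (hQ : Q ≠ 0) (ha : a ≠ 0) :
    log (1 / Q) * log (a ^ 2 / Q) = log (Q / a) ^ 2 - log a ^ 2 := by
  rw [one_div, log_inv, log_div (pow_ne_zero 2 ha) hQ, log_pow, log_div hQ ha]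
  ring

theorem thaloid_of_fibre_segment_is_sphere_general (ε a : ℝ)
    (ha : 0 < a) :
    {p : ℝ × ℝ × ℝ |
        0 < p.2.1 ^ 2 + p.2.2 ^ 2 ∧
        0 < p.1 ^ 2 + ε * (p.2.1 ^ 2 + p.2.2 ^ 2) ∧
        Real.log (1 / (p.1 ^ 2 + ε * (p.2.1 ^ 2 + p.2.2 ^ 2)))
            * Real.log (a ^ 2 / (p.1 ^ 2 + ε * (p.2.1 ^ 2 + p.2.2 ^ 2))) / 4
          + arcC ε (p.1 / Real.sqrt (p.1 ^ 2 + ε * (p.2.1 ^ 2 + p.2.2 ^ 2))) ^ 2 = 0}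
      =
    {p : ℝ × ℝ × ℝ |
        0 < p.2.1 ^ 2 + p.2.2 ^ 2 ∧
        0 < p.1 ^ 2 + ε * (p.2.1 ^ 2 + p.2.2 ^ 2) ∧
        (fun x' y' z' =>
          (Real.log (x' ^ 2 + ε * (y' ^ 2 + z' ^ 2))) ^ 2 / 4
            + arcC ε (x' / Real.sqrt (x' ^ 2 + ε * (y' ^ 2 + z' ^ 2))) ^ 2
              = (Real.log a / 2) ^ 2)
          (p.1 / Real.sqrt a) (p.2.1 / Real.sqrt a) (p.2.2 / Real.sqrt a)} := by
  ext ⟨x, y, z⟩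
  simp only [Set.mem_ofPred_eq]
  refine and_congr_right fun _ => and_congr_right fun hQ => ?_
  rw [quadForm_div_sqrt ε x y z ha.le, div_sqrt_div_sqrt_div x _ ha,
    log_one_div_mul_log_sq_div hQ.ne' ha.ne']
  constructor <;> intro h <;> linear_combination h

/-- The Thaloid of the fibre segment from `(1,1,0,0)` to `(1,a,0,0)` is the translation
sphere of radius `(1/2) log a` centred at `(1,√a,0,0)`: a point satisfies the Thaloid
equation iff its image under the fibre translation `diag(1,1/√a,1/√a,1/√a)` satisfies the
implicit sphere equation with radius `(1/2) log a`. -/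
theorem thaloid_of_fibre_segment_is_sphere (ε a : ℝ)
    (hε : ε = 1 ∨ ε = -1) (ha : 0 < a) :
    {p : ℝ × ℝ × ℝ |
        0 < p.2.1 ^ 2 + p.2.2 ^ 2 ∧
        0 < p.1 ^ 2 + ε * (p.2.1 ^ 2 + p.2.2 ^ 2) ∧
        Real.log (1 / (p.1 ^ 2 + ε * (p.2.1 ^ 2 + p.2.2 ^ 2)))
            * Real.log (a ^ 2 / (p.1 ^ 2 + ε * (p.2.1 ^ 2 + p.2.2 ^ 2))) / 4
          + arcC ε (p.1 / Real.sqrt (p.1 ^ 2 + ε * (p.2.1 ^ 2 + p.2.2 ^ 2))) ^ 2 = 0}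
      =
    {p : ℝ × ℝ × ℝ |
        0 < p.2.1 ^ 2 + p.2.2 ^ 2 ∧
        0 < p.1 ^ 2 + ε * (p.2.1 ^ 2 + p.2.2 ^ 2) ∧
        (fun x' y' z' =>
          (Real.log (x' ^ 2 + ε * (y' ^ 2 + z' ^ 2))) ^ 2 / 4
            + arcC ε (x' / Real.sqrt (x' ^ 2 + ε * (y' ^ 2 + z' ^ 2))) ^ 2
              = (Real.log a / 2) ^ 2)
          (p.1 / Real.sqrt a) (p.2.1 / Real.sqrt a) (p.2.2 / Real.sqrt a)} :=
  thaloid_of_fibre_segment_is_sphere_general ε a ha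
end

section
/- Let ε = ±1 and let P = (x, y, z) with y² + z² > 0 and Q := x² + ε(y² + z²) > 0. The matrix T_P (as defined in the paper) preserves the quadratic quantity: for any (1, a, b, c), writing (1, a', b', c') = (1, a, b, c)·T_P, one has a'² + ε(b'² + c'²) = (a² + ε(b² + c²))/Q. -/
open Real Matrix

set_option maxHeartbeats 1000000

theorem TP_scales_quadratic_form (ε a b c x y z : ℝ)
    (hε : ε = 1 ∨ ε = -1)
    (hyz : 0 < y ^ 2 + z ^ 2)
    (Q : ℝ) (hQdef : Q = x ^ 2 + ε * (y ^ 2 + z ^ 2)) (hQ : 0 < Q)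
    (T : Matrix (Fin 4) (Fin 4) ℝ)
    (hT : T = !![1, 0, 0, 0;
                 0, x / Q, -y / Q, -z / Q;
                 0, ε * y / Q, (x * y ^ 2 + z ^ 2 * Real.sqrt Q) / (Q * (y ^ 2 + z ^ 2)),
                    (x * y * z - y * z * Real.sqrt Q) / (Q * (y ^ 2 + z ^ 2));
                 0, ε * z / Q, (x * y * z - y * z * Real.sqrt Q) / (Q * (y ^ 2 + z ^ 2)),
                    (x * z ^ 2 + y ^ 2 * Real.sqrt Q) / (Q * (y ^ 2 + z ^ 2))])
    (a' b' c' : ℝ)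
    (ha' : a' = Matrix.vecMul ![1, a, b, c] T 1)
    (hb' : b' = Matrix.vecMul ![1, a, b, c] T 2)
    (hc' : c' = Matrix.vecMul ![1, a, b, c] T 3) :
    a' ^ 2 + ε * (b' ^ 2 + c' ^ 2) = (a ^ 2 + ε * (b ^ 2 + c ^ 2)) / Q := by
  subst hT
  have hQ0 : Q ≠ 0 := ne_of_gt hQ
  have hr0 : y ^ 2 + z ^ 2 ≠ 0 := ne_of_gt hyz
  have hs : Real.sqrt Q * Real.sqrt Q = Q := Real.mul_self_sqrt hQ.le
  have he2 : ε * ε = 1 := by rcases hε with h | h <;> rw [h] <;> norm_num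
  simp [Matrix.vecMul, dotProduct, Fin.sum_univ_four] at ha' hb' hc'
  have ha2 : a' = (a * x + ε * (b * y + c * z)) / Q := by
    rw [ha']; field_simp; ring
  have hb2 : b' = (y * (x * (b * y + c * z) - a * (y ^ 2 + z ^ 2)) +
      Real.sqrt Q * (z * (b * z - c * y))) / (Q * (y ^ 2 + z ^ 2)) := by
    rw [hb']; field_simp; ring
  have hc2 : c' = (z * (x * (b * y + c * z) - a * (y ^ 2 + z ^ 2)) -
      Real.sqrt Q * (y * (b * z - c * y))) / (Q * (y ^ 2 + z ^ 2)) := by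
    rw [hc']; field_simp; ring
  rw [ha2, hb2, hc2]
  field_simp
  rcases hε with rfl | rfl <;> subst hQdef
  · linear_combination (y ^ 2 + z ^ 2) * (b * z - y * c) ^ 2 * hs
  · linear_combination -(y ^ 2 + z ^ 2) * (b * z - y * c) ^ 2 * hs
end

section
/- Let ε = ±1 and a > 0, P = (x,y,z) with y²+z² > 0 and Q := x² + ε(y²+z²) > 0 (and x/√Q in the domain of arcC). Suppose (1/4)·(log Q)² + arcC(x/√Q)² > 0 and (1/4)·(log(Q/a²))² + arcC(x/√Q)² > 0 (i.e. P ≠ A₁ and P ≠ A₂ under the isometry T_P). Then the cosine of the angle at P between the translation curves to A₁ = (1,1,0,0) and A₂ = (1,a,0,0) equals [(1/4)·log(1/Q)·log(a²/Q) + A²] / √[((1/4)(log Q)² + A²)·((1/4)(log(Q/a²))² + A²)], where A = arcC(x/√Q); in particular this cosine equals 0 iff (1/4)·log(1/Q)·log(a²/Q) + A² = 0. -/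
open Real

/-!
Both tangent vectors have the form `(s, -A u, -A w)` with the same unit vector
`(u, w) = (y, z) / √(y² + z²)`, so their inner products are those of the planar vectors
`(s, A)`. The first coordinates are `-(1/2) log Q` and `-(1/2) log (Q / a²)`, since
`log (1 / Q)` and `log (a² / Q)` are logarithms of reciprocals.
-/

theorem div_sqrt_sq_add_div_sqrt_sq {y z : ℝ} (h : 0 < y ^ 2 + z ^ 2) :
    (y / √(y ^ 2 + z ^ 2)) ^ 2 + (z / √(y ^ 2 + z ^ 2)) ^ 2 = 1 := by
  rw [div_pow, div_pow, sq_sqrt h.le, ← add_div, div_self h.ne']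

section UnitFibre

variable {u w : ℝ} (huw : u ^ 2 + w ^ 2 = 1) (A : ℝ)
include huw

theorem inner_of_sq_add_sq_eq_one (s s' : ℝ) :
    s * s' + -u * A * (-u * A) + -w * A * (-w * A) = s * s' + A ^ 2 := by
  linear_combination A ^ 2 * huw

theorem norm_sq_of_sq_add_sq_eq_one (s : ℝ) :
    s ^ 2 + (-u * A) ^ 2 + (-w * A) ^ 2 = s ^ 2 + A ^ 2 := by
  simpa only [sq] using inner_of_sq_add_sq_eq_one huw A s s

end UnitFibre

theorem cosine_of_angle_at_P_fibre_segment_general (a y z : ℝ)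
    (hyz : 0 < y ^ 2 + z ^ 2)
    (Q : ℝ)
    (A : ℝ)
    (hP1 : 0 < (Real.log Q) ^ 2 / 4 + A ^ 2)
    (hP2 : 0 < (Real.log (Q / a ^ 2)) ^ 2 / 4 + A ^ 2)
    (t₁ t₂ : ℝ × ℝ × ℝ)
    (ht₁ : t₁ = (Real.log (1 / Q) / 2,
                 -(y / Real.sqrt (y ^ 2 + z ^ 2)) * A,
                 -(z / Real.sqrt (y ^ 2 + z ^ 2)) * A))
    (ht₂ : t₂ = (Real.log (a ^ 2 / Q) / 2,
                 -(y / Real.sqrt (y ^ 2 + z ^ 2)) * A,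
                 -(z / Real.sqrt (y ^ 2 + z ^ 2)) * A)) :
    (t₁.1 * t₂.1 + t₁.2.1 * t₂.2.1 + t₁.2.2 * t₂.2.2) /
        (Real.sqrt (t₁.1 ^ 2 + t₁.2.1 ^ 2 + t₁.2.2 ^ 2) *
         Real.sqrt (t₂.1 ^ 2 + t₂.2.1 ^ 2 + t₂.2.2 ^ 2))
      = (Real.log (1 / Q) * Real.log (a ^ 2 / Q) / 4 + A ^ 2) /
          Real.sqrt (((Real.log Q) ^ 2 / 4 + A ^ 2) *
                     ((Real.log (Q / a ^ 2)) ^ 2 / 4 + A ^ 2)) ∧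
    ((Real.log (1 / Q) * Real.log (a ^ 2 / Q) / 4 + A ^ 2) /
          Real.sqrt (((Real.log Q) ^ 2 / 4 + A ^ 2) *
                     ((Real.log (Q / a ^ 2)) ^ 2 / 4 + A ^ 2)) = 0 ↔
      Real.log (1 / Q) * Real.log (a ^ 2 / Q) / 4 + A ^ 2 = 0) := by
  subst ht₁ ht₂
  have hunit := div_sqrt_sq_add_div_sqrt_sq hyz
  have hnorm₁ : (log (1 / Q) / 2) ^ 2 + A ^ 2 = log Q ^ 2 / 4 + A ^ 2 := by
    rw [one_div, log_inv]; ring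
  have hnorm₂ : (log (a ^ 2 / Q) / 2) ^ 2 + A ^ 2 = log (Q / a ^ 2) ^ 2 / 4 + A ^ 2 := by
    rw [← inv_div Q, log_inv]; ring
  have hden : 0 < √((log Q ^ 2 / 4 + A ^ 2) * (log (Q / a ^ 2) ^ 2 / 4 + A ^ 2)) :=
    sqrt_pos.mpr (mul_pos hP1 hP2)
  refine ⟨?_, div_eq_zero_iff.trans (or_iff_left hden.ne')⟩
  rw [inner_of_sq_add_sq_eq_one hunit, norm_sq_of_sq_add_sq_eq_one hunit,
    norm_sq_of_sq_add_sq_eq_one hunit, hnorm₁, hnorm₂, ← sqrt_mul hP1.le]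
  ring

theorem cosine_of_angle_at_P_fibre_segment (ε a x y z : ℝ)
    (hε : ε = 1 ∨ ε = -1) (ha : 0 < a)
    (hyz : 0 < y ^ 2 + z ^ 2)
    (Q : ℝ) (hQdef : Q = x ^ 2 + ε * (y ^ 2 + z ^ 2)) (hQ : 0 < Q)
    (A : ℝ) (hA : A = arcC ε (x / Real.sqrt Q))
    (hP1 : 0 < (Real.log Q) ^ 2 / 4 + A ^ 2)
    (hP2 : 0 < (Real.log (Q / a ^ 2)) ^ 2 / 4 + A ^ 2)
    (t₁ t₂ : ℝ × ℝ × ℝ)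
    (ht₁ : t₁ = (Real.log (1 / Q) / 2,
                 -(y / Real.sqrt (y ^ 2 + z ^ 2)) * A,
                 -(z / Real.sqrt (y ^ 2 + z ^ 2)) * A))
    (ht₂ : t₂ = (Real.log (a ^ 2 / Q) / 2,
                 -(y / Real.sqrt (y ^ 2 + z ^ 2)) * A,
                 -(z / Real.sqrt (y ^ 2 + z ^ 2)) * A)) :
    (t₁.1 * t₂.1 + t₁.2.1 * t₂.2.1 + t₁.2.2 * t₂.2.2) /
        (Real.sqrt (t₁.1 ^ 2 + t₁.2.1 ^ 2 + t₁.2.2 ^ 2) *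
         Real.sqrt (t₂.1 ^ 2 + t₂.2.1 ^ 2 + t₂.2.2 ^ 2))
      = (Real.log (1 / Q) * Real.log (a ^ 2 / Q) / 4 + A ^ 2) /
          Real.sqrt (((Real.log Q) ^ 2 / 4 + A ^ 2) *
                     ((Real.log (Q / a ^ 2)) ^ 2 / 4 + A ^ 2)) ∧
    ((Real.log (1 / Q) * Real.log (a ^ 2 / Q) / 4 + A ^ 2) /
          Real.sqrt (((Real.log Q) ^ 2 / 4 + A ^ 2) *
                     ((Real.log (Q / a ^ 2)) ^ 2 / 4 + A ^ 2)) = 0 ↔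
      Real.log (1 / Q) * Real.log (a ^ 2 / Q) / 4 + A ^ 2 = 0) :=
  cosine_of_angle_at_P_fibre_segment_general a y z hyz Q A hP1 hP2 t₁ t₂ ht₁ ht₂
end
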